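/- Let (G_k,y) be a weakly reversible mass-action system and x* ∈ ℝ^n_{>0} a positive complex-balanced equilibrium. Then the set of all positive complex-balanced equilibria equals { x* ∘ e^v : v ∈ S^⊥ }, where ∘ denotes the componentwise product, e^v the componentwise exponential, and S^⊥ the orthogonal complement of the stoichiometric subspace S = im(Y I_E). -/

import Mathlib

open Matrix BigOperators Finset

variable {V : Type*}

/-- Directed reachability in the digraph with edge set `F`. -/
def dReach (F : Finset (V × V)) : V → V → Prop :=
  Relation.ReflTransGen fun a b => (a, b) ∈ F

/-- Reachability in the underlying undirected graph of the digraph with edge set `F`. -/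
def uReach (F : Finset (V × V)) : V → V → Prop :=
  Relation.ReflTransGen fun a b => (a, b) ∈ F ∨ (b, a) ∈ F

/-- A digraph is strongly connected if every vertex reaches every other vertex. -/
def StronglyConnected (F : Finset (V × V)) : Prop :=
  ∀ i j : V, dReach F i j

/-- A simple digraph has no self-loops. -/
def NoSelfLoops (F : Finset (V × V)) : Prop :=
  ∀ e ∈ F, e.1 ≠ e.2

/-- The edge set `F` contains a directed cycle. -/
def HasDirectedCycle (F : Finset (V × V)) : Prop :=
  ∃ v : V, Relation.TransGen (fun a b => (a, b) ∈ F) v v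

/-- The Laplacian matrix `A_k` of the labeled digraph `(V, F, k)`:
`(A_k)_{i,j} = k_{j→i}` if `(j→i) ∈ F`, `(A_k)_{i,i} = -∑_{(i→j)∈F} k_{i→j}`, and `0` otherwise. -/
noncomputable def kLaplacian [Fintype V] [DecidableEq V]
    (F : Finset (V × V)) (k : V × V → ℝ) : Matrix V V ℝ :=
  Matrix.of fun i j =>
    if i = j then -(∑ e ∈ F.filter (fun e => e.1 = i), k e)
    else if (j, i) ∈ F then k (j, i) else 0

/-- `T` is a directed spanning tree of the strongly connected digraph `E`, rooted at `i`
and directed towards the root: no directed cycle, and every vertex except `i`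
is the source of exactly one edge. -/
def IsSpanningTreeTo [DecidableEq V] (E : Finset (V × V)) (i : V)
    (T : Finset (V × V)) : Prop :=
  T ⊆ E ∧ ¬ HasDirectedCycle T ∧
    ∀ j : V, j ≠ i → (T.filter (fun e => e.1 = j)).card = 1

open scoped Classical in
/-- The tree constant `(K_k)_i = ∑_{T ∈ T_i} ∏_{(j→j')∈T} k_{j→j'}`. -/
noncomputable def treeConst [Fintype V] [DecidableEq V]
    (E : Finset (V × V)) (k : V × V → ℝ) (i : V) : ℝ :=
  ∑ T ∈ E.powerset.filter (fun T => IsSpanningTreeTo E i T), ∏ e ∈ T, k e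

/-- The incidence matrix of the digraph with edge set `F`: in the column of edge `(j→j')`,
entry `-1` in row `j`, entry `+1` in row `j'`, and `0` elsewhere. -/
noncomputable def incidence [DecidableEq V] (F : Finset (V × V)) :
    Matrix V {e : V × V // e ∈ F} ℝ :=
  Matrix.of fun i e =>
    (if (e : V × V).2 = i then (1 : ℝ) else 0) - (if (e : V × V).1 = i then (1 : ℝ) else 0)

/-- Every connected component of the digraph is strongly connected: whenever `j` is reachable
from `i` in the underlying undirected graph, it is reachable by a directed path. -/
def WeaklyReversible {V : Type*} (F : Finset (V × V)) : Prop :=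
  ∀ i j : V, uReach F i j → dReach F i j

/-- The underlying undirected simple graph of the digraph with edge set `F`. -/
def toSimpleGraph {V : Type*} (F : Finset (V × V)) : SimpleGraph V :=
  SimpleGraph.fromRel fun a b => (a, b) ∈ F

/-- `F` is an auxiliary digraph for the digraph `E`: its connected components are directed
trees on the vertex sets of the connected components of `E`. That is, `F` has no self-loops
and no pair of opposite edges, its underlying undirected graph is acyclic (a forest), and
its connected components coincide with those of `E`. -/
def IsAuxiliary {V : Type*} (E F : Finset (V × V)) : Prop :=
  NoSelfLoops F ∧ (∀ a b : V, (a, b) ∈ F → (b, a) ∉ F) ∧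
    (toSimpleGraph F).IsAcyclic ∧ (∀ i j : V, uReach F i j ↔ uReach E i j)

/-- `F` is a chain graph for `E`: an auxiliary digraph each of whose components is a chain
`i_1 → i_2 → … → i_m` on the corresponding component of `E`; equivalently, an auxiliary
digraph in which every vertex has out-degree at most one and in-degree at most one. -/
def IsChainGraphOn {V : Type*} [DecidableEq V] (E F : Finset (V × V)) : Prop :=
  IsAuxiliary E F ∧ (∀ v : V, (F.filter (fun e => e.1 = v)).card ≤ 1) ∧
    (∀ v : V, (F.filter (fun e => e.2 = v)).card ≤ 1)

/-- `F` is a star graph for `E`: an auxiliary digraph each of whose components is a star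
`i_1 → i_m, …, i_{m-1} → i_m` on the corresponding component of `E`; equivalently, an
auxiliary digraph in which all edges of one component share the same target (the root). -/
def IsStarGraphOn {V : Type*} (E F : Finset (V × V)) : Prop :=
  IsAuxiliary E F ∧ ∀ e ∈ F, ∀ e' ∈ F, uReach F e.2 e'.2 → e.2 = e'.2

/-- `T` is a directed spanning tree, rooted at `i` and directed towards the root, of the
connected component of `i` in the digraph `E`: no directed cycle, every vertex of the
component except `i` is the source of exactly one edge, and vertices outside the component
are sources of no edge. -/
def IsCompSpanningTreeTo {V : Type*} [DecidableEq V] (E : Finset (V × V)) (i : V)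
    (T : Finset (V × V)) : Prop :=
  T ⊆ E ∧ ¬ HasDirectedCycle T ∧
    (∀ j : V, j ≠ i → uReach E j i → (T.filter (fun e => e.1 = j)).card = 1) ∧
    (∀ j : V, ¬ uReach E j i → (T.filter (fun e => e.1 = j)).card = 0)

open scoped Classical in
/-- The tree constants, given componentwise: on each component `V^λ`,
`(K_k)_i = ∑_{T ∈ T_i} ∏_{(j→j')∈T} k_{j→j'}` with `T_i` the set of directed spanning trees
of the component rooted at `i`, directed towards the root. -/
noncomputable def treeConstM {V : Type*} [Fintype V] [DecidableEq V]
    (E : Finset (V × V)) (k : V × V → ℝ) (i : V) : ℝ :=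
  ∑ T ∈ E.powerset.filter (fun T => IsCompSpanningTreeTo E i T), ∏ e ∈ T, k e

/-- The (generalized) monomial `x^{y(i)} = ∏_j x_j^{(y(i))_j}` (real exponentiation). -/
noncomputable def monomial {V : Type*} [Fintype V] {n : ℕ}
    (y : V → Fin n → ℝ) (x : Fin n → ℝ) (i : V) : ℝ :=
  ∏ j : Fin n, x j ^ y i j

/-- The matrix `Y ∈ ℝ^{n × V}` whose columns are the complexes `y(i)`. -/
noncomputable def complexMatrix {V : Type*} {n : ℕ} (y : V → Fin n → ℝ) :
    Matrix (Fin n) V ℝ :=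
  Matrix.of fun j i => y i j

/-- The mass-action vector field `f_k(x) = Y A_k x^Y`. -/
noncomputable def massActionField {V : Type*} [Fintype V] [DecidableEq V] {n : ℕ}
    (E : Finset (V × V)) (k : V × V → ℝ) (y : V → Fin n → ℝ) (x : Fin n → ℝ) :
    Fin n → ℝ :=
  (complexMatrix y).mulVec ((kLaplacian E k).mulVec (monomial y x))

/-!
Write `x = x* ∘ e^v` and `z = Yᵀ v`, so that `x^Y = (x*)^Y ∘ e^z`. Pairing `A_k g` with a test
function `φ` gives `∑_{e : i → i'} k_e g_i (φ_{i'} - φ_i)`. Testing the balance of `x*` against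
`e^z` and the balance of `x` against `z` and subtracting yields
`∑_e k_e (x*)^{y(i)} (e^{z_{i'}} - e^{z_i} - e^{z_i} (z_{i'} - z_i)) = 0`, a sum of nonnegative
terms by convexity of `exp`, which vanish only if `z_i = z_{i'}`. So `z` is constant along
edges, which is exactly `v ∈ S^⊥`. Conversely, if `z` is constant along edges, `A_k` commutes
with multiplication by `e^z`, so `A_k x^Y = e^z ∘ A_k (x*)^Y = 0`.
-/

lemma Real.exp_sub_exp_sub_mul_pos {a b : ℝ} (h : a ≠ b) :
    0 < Real.exp b - Real.exp a - Real.exp a * (b - a) := by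
  have hlt := Real.add_one_lt_exp (sub_ne_zero.2 h.symm)
  have hexp : Real.exp b = Real.exp a * Real.exp (b - a) := by rw [← Real.exp_add]; ring_nf
  rw [hexp]
  nlinarith [Real.exp_pos a]

lemma Real.exp_sub_exp_sub_mul_nonneg (a b : ℝ) :
    0 ≤ Real.exp b - Real.exp a - Real.exp a * (b - a) := by
  rcases eq_or_ne a b with rfl | h
  · simp
  · exact (Real.exp_sub_exp_sub_mul_pos h).le

section Laplacian

variable [Fintype V] [DecidableEq V] {E : Finset (V × V)} {k : V × V → ℝ}

lemma kLaplacian_mulVec_apply (hloop : NoSelfLoops E) (g : V → ℝ) (i : V) :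
    (kLaplacian E k *ᵥ g) i =
      ∑ e ∈ E with e.2 = i, k e * g e.1 - ∑ e ∈ E with e.1 = i, k e * g e.1 := by
  have hii : (i, i) ∉ E := fun h => hloop _ h rfl
  have hentry (j : V) : kLaplacian E k i j * g j =
      (if j = i then -(∑ e ∈ E with e.1 = i, k e * g e.1) else 0) +
        (if (j, i) ∈ E then k (j, i) * g j else 0) := by
    by_cases hij : j = i
    · subst hij
      simp only [kLaplacian, of_apply, if_true, hii, if_false, add_zero, Finset.sum_mul, neg_mul]
      exact congrArg _ (Finset.sum_congr rfl fun e he => by rw [(Finset.mem_filter.1 he).2])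
    · simp [kLaplacian, hij, Ne.symm hij, ite_mul]
  have hinflow : ∑ j, (if (j, i) ∈ E then k (j, i) * g j else 0) =
      ∑ e ∈ E with e.2 = i, k e * g e.1 := by
    rw [← Finset.sum_filter]
    refine Finset.sum_nbij' (fun j => (j, i)) Prod.fst ?_ ?_ ?_ ?_ ?_ <;> aesop
  simp only [mulVec, dotProduct, hentry, Finset.sum_add_distrib, Finset.sum_ite_eq',
    Finset.mem_univ, if_true, hinflow]
  ring

lemma dotProduct_kLaplacian_mulVec (hloop : NoSelfLoops E) (φ g : V → ℝ) :
    φ ⬝ᵥ (kLaplacian E k *ᵥ g) = ∑ e ∈ E, k e * g e.1 * (φ e.2 - φ e.1) := by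
  have hfiber (f : V × V → V) (h : V × V → ℝ) :
      ∑ i, φ i * ∑ e ∈ E with f e = i, h e = ∑ e ∈ E, φ (f e) * h e := by
    simp only [Finset.mul_sum]
    rw [← Finset.sum_fiberwise_of_maps_to (g := f) (fun e _ => Finset.mem_univ _)]
    exact Finset.sum_congr rfl fun i _ => Finset.sum_congr rfl fun e he => by
      rw [(Finset.mem_filter.1 he).2]
  simp only [dotProduct, kLaplacian_mulVec_apply hloop, mul_sub, Finset.sum_sub_distrib,
    hfiber]
  congr 1 <;> exact Finset.sum_congr rfl fun e _ => by ring

lemma kLaplacian_mulVec_mul_of_eq_on_edges {c : V → ℝ} (hc : ∀ e ∈ E, c e.1 = c e.2)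
    (g : V → ℝ) :
    kLaplacian E k *ᵥ (fun i => c i * g i) = fun i => c i * (kLaplacian E k *ᵥ g) i := by
  ext i
  simp only [mulVec, dotProduct, Finset.mul_sum]
  refine Finset.sum_congr rfl fun j _ => ?_
  simp only [kLaplacian, of_apply]
  split_ifs with hij hji
  · subst hij; ring
  · rw [hc _ hji]; ring
  · ring

lemma eq_on_edges_of_kLaplacian_mulVec_mul_exp_eq_zero (hloop : NoSelfLoops E)
    (hk : ∀ e ∈ E, 0 < k e) {g z : V → ℝ} (hg : ∀ i, 0 < g i) (h₀ : kLaplacian E k *ᵥ g = 0)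
    (h₁ : kLaplacian E k *ᵥ (fun i => g i * Real.exp (z i)) = 0) :
    ∀ e ∈ E, z e.1 = z e.2 := by
  have hsum : ∑ e ∈ E, k e * g e.1 *
      (Real.exp (z e.2) - Real.exp (z e.1) - Real.exp (z e.1) * (z e.2 - z e.1)) = 0 := by
    have hexp := dotProduct_kLaplacian_mulVec (k := k) hloop (fun i => Real.exp (z i)) g
    have hlin := dotProduct_kLaplacian_mulVec (k := k) hloop z (fun i => g i * Real.exp (z i))
    rw [h₀, dotProduct_zero] at hexp
    rw [h₁, dotProduct_zero] at hlin
    calc _ = ∑ e ∈ E, k e * g e.1 * (Real.exp (z e.2) - Real.exp (z e.1)) -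
          ∑ e ∈ E, k e * (g e.1 * Real.exp (z e.1)) * (z e.2 - z e.1) := by
            rw [← Finset.sum_sub_distrib]
            exact Finset.sum_congr rfl fun e _ => by ring
      _ = 0 := by rw [← hexp, ← hlin, sub_self]
  by_contra! hne
  obtain ⟨e, he, hze⟩ := hne
  refine hsum.not_gt (Finset.sum_pos' (fun e he => ?_) ⟨e, he, ?_⟩)
  · exact mul_nonneg (mul_pos (hk e he) (hg _)).le (Real.exp_sub_exp_sub_mul_nonneg _ _)
  · exact mul_pos (mul_pos (hk e he) (hg _)) (Real.exp_sub_exp_sub_mul_pos hze)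

end Laplacian

lemma monomial_pos [Fintype V] {n : ℕ} (y : V → Fin n → ℝ) {x : Fin n → ℝ}
    (hx : ∀ j, 0 < x j) (i : V) : 0 < monomial y x i :=
  Finset.prod_pos fun j _ => Real.rpow_pos_of_pos (hx j) _

lemma monomial_mul_exp [Fintype V] {n : ℕ} (y : V → Fin n → ℝ) {x : Fin n → ℝ}
    (hx : ∀ j, 0 ≤ x j) (v : Fin n → ℝ) :
    monomial y (fun j => x j * Real.exp (v j)) =
      fun i => monomial y x i * Real.exp (y i ⬝ᵥ v) := by
  ext i
  rw [monomial, monomial, dotProduct, Real.exp_sum, ← Finset.prod_mul_distrib]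
  refine Finset.prod_congr rfl fun j _ => ?_
  rw [Real.mul_rpow (hx j) (Real.exp_pos _).le, ← Real.exp_mul, mul_comm (v j)]

lemma forall_mem_range_mulVecLin_dotProduct_eq_zero_iff {m p R : Type*} [Fintype m]
    [Fintype p] [CommSemiring R] (M : Matrix m p R) (v : m → R) :
    (∀ s ∈ LinearMap.range M.mulVecLin, v ⬝ᵥ s = 0) ↔ v ᵥ* M = 0 := by
  simp only [LinearMap.mem_range, mulVecLin_apply, forall_exists_index, forall_apply_eq_imp_iff,
    dotProduct_mulVec, dotProduct_eq_zero_iff]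

lemma vecMul_complexMatrix {n : ℕ} (y : V → Fin n → ℝ)
    (v : Fin n → ℝ) : v ᵥ* complexMatrix y = fun i => y i ⬝ᵥ v := by
  ext i
  simp only [vecMul, dotProduct, complexMatrix, of_apply, mul_comm]

lemma vecMul_incidence [Fintype V] [DecidableEq V] (F : Finset (V × V))
    (z : V → ℝ) (e : {e : V × V // e ∈ F}) :
    (z ᵥ* incidence F) e = z e.1.2 - z e.1.1 := by
  simp [vecMul, dotProduct, incidence, mul_sub]

lemma orthogonal_stoichiometric_iff [Fintype V] [DecidableEq V] {n : ℕ}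
    (E : Finset (V × V)) (y : V → Fin n → ℝ) (v : Fin n → ℝ) :
    (∀ s ∈ LinearMap.range (complexMatrix y * incidence E).mulVecLin,
        ∑ j : Fin n, v j * s j = 0) ↔ ∀ e ∈ E, y e.1 ⬝ᵥ v = y e.2 ⬝ᵥ v := by
  change (∀ s ∈ _, v ⬝ᵥ s = 0) ↔ _
  rw [forall_mem_range_mulVecLin_dotProduct_eq_zero_iff, ← vecMul_vecMul,
    vecMul_complexMatrix, funext_iff]
  simp only [vecMul_incidence, Pi.zero_apply, sub_eq_zero, Subtype.forall, eq_comm]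

theorem complex_balanced_equilibria_monomial_parametrization_general
    {V : Type*} [Fintype V] [DecidableEq V] {n : ℕ}
    (E : Finset (V × V)) (hloop : NoSelfLoops E)
    (k : V × V → ℝ) (hk : ∀ e ∈ E, 0 < k e)
    (y : V → Fin n → ℝ)
    (xs : Fin n → ℝ) (hxs : ∀ j, 0 < xs j)
    (hcb : (kLaplacian E k).mulVec (monomial y xs) = 0) :
    {x : Fin n → ℝ | (∀ j, 0 < x j) ∧ (kLaplacian E k).mulVec (monomial y x) = 0} =
      {x : Fin n → ℝ | ∃ v : Fin n → ℝ,
        (∀ s ∈ LinearMap.range (complexMatrix y * incidence E).mulVecLin,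
          ∑ j : Fin n, v j * s j = 0) ∧
        x = fun j => xs j * Real.exp (v j)} := by
  ext x
  simp only [Set.mem_ofPred_eq, orthogonal_stoichiometric_iff]
  constructor
  · rintro ⟨hx, hxcb⟩
    have hxv : x = fun j => xs j * Real.exp (Real.log (x j) - Real.log (xs j)) := by
      funext j
      rw [Real.exp_sub, Real.exp_log (hx j), Real.exp_log (hxs j), mul_div_cancel₀ _ (hxs j).ne']
    refine ⟨_, ?_, hxv⟩
    rw [hxv, monomial_mul_exp y fun j => (hxs j).le] at hxcb
    exact eq_on_edges_of_kLaplacian_mulVec_mul_exp_eq_zero hloop hk (monomial_pos y hxs) hcb hxcb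
  · rintro ⟨v, hv, rfl⟩
    refine ⟨fun j => mul_pos (hxs j) (Real.exp_pos _), ?_⟩
    simp_rw [monomial_mul_exp y (fun j => (hxs j).le), mul_comm (monomial y xs _)]
    rw [kLaplacian_mulVec_mul_of_eq_on_edges (fun e he => by rw [hv e he]), hcb]
    funext i
    simp

/-- For a weakly reversible mass-action system with positive complex-balanced equilibrium
`x*`, the set of all positive complex-balanced equilibria equals
`{ x* ∘ e^v : v ∈ S^⊥ }`, where `S = im(Y I_E)` is the stoichiometric subspace. -/
theorem complex_balanced_equilibria_monomial_parametrization
    {V : Type*} [Fintype V] [DecidableEq V] {n : ℕ}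
    (E : Finset (V × V)) (hloop : NoSelfLoops E)
    (k : V × V → ℝ) (hk : ∀ e ∈ E, 0 < k e)
    (y : V → Fin n → ℝ) (hyinj : Function.Injective y) (hynn : ∀ i j, 0 ≤ y i j)
    (hwr : WeaklyReversible E)
    (xs : Fin n → ℝ) (hxs : ∀ j, 0 < xs j)
    (hcb : (kLaplacian E k).mulVec (monomial y xs) = 0) :
    {x : Fin n → ℝ | (∀ j, 0 < x j) ∧ (kLaplacian E k).mulVec (monomial y x) = 0} =
      {x : Fin n → ℝ | ∃ v : Fin n → ℝ,
        (∀ s ∈ LinearMap.range (complexMatrix y * incidence E).mulVecLin,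
          ∑ j : Fin n, v j * s j = 0) ∧
        x = fun j => xs j * Real.exp (v j)} :=
  complex_balanced_equilibria_monomial_parametrization_general E hloop k hk y xs hxs hcb
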